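/- Let X be a Hilbert space, T ∈ B(X) with a {1,3,7}-inverse S, and δT ∈ B(X) with I + S·δT invertible. Suppose B = (I + S·δT)⁻¹S is a {1,3,7}-inverse of T̄ = T + δT. Then N(TS) ⊆ N(T̄B), where N denotes kernel. -/

import Mathlib

theorem Ring.inverse_one_add_mul_mul_mul_one_add_mul {R : Type*} [Ring R] {s d : R}
    (hu : IsUnit (1 + s * d)) : Ring.inverse (1 + s * d) * s * (1 + d * s) = s := by
  calc Ring.inverse (1 + s * d) * s * (1 + d * s)
      = Ring.inverse (1 + s * d) * (1 + s * d) * s := by noncomm_ring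
    _ = s := by rw [Ring.inverse_mul_cancel _ hu, one_mul]

/-- With `q = (t + d) * b`, the hypothesis `b * (1 + d * s) = s` gives `q * (1 + d * s) = t * s + d * s`;
multiplying by the idempotent `q` on the left cancels `q * (d * s)` and leaves `q = q * (t * s)`. -/
theorem mul_mul_mul_eq_of_mul_one_add_mul_eq {R : Type*} [Ring R] {t d s b : R}
    (hb : (t + d) * b * (t + d) = t + d) (hbs : b * (1 + d * s) = s) :
    (t + d) * b * (t * s) = (t + d) * b := by
  set q := (t + d) * b
  have hqq : q * q = q := by rw [← mul_assoc, hb]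
  have hq : q * (1 + d * s) = (t + d) * s := by rw [mul_assoc, hbs]
  calc q * (t * s) = q * ((t + d) * s) - q * (d * s) := by noncomm_ring
    _ = q * q * (1 + d * s) - q * (d * s) := by rw [← hq, ← mul_assoc]
    _ = q := by rw [hqq]; noncomm_ring

theorem ContinuousLinearMap.ker_le_ker_of_mul_eq {R M : Type*} [Semiring R] [TopologicalSpace M]
    [AddCommMonoid M] [Module R M] {f g : M →L[R] M} (h : g * f = g) :
    LinearMap.ker (f : M →ₗ[R] M) ≤ LinearMap.ker (g : M →ₗ[R] M) := by
  intro x hx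
  rw [LinearMap.mem_ker] at hx ⊢
  rw [← h]
  simp [hx]

theorem stmt_18_general {X : Type*} [NormedAddCommGroup X] [InnerProductSpace ℂ X]
    (T S δT : X →L[ℂ] X)
    (hinv : IsUnit (1 + S * δT))
    (hB1 : (T + δT) * (Ring.inverse (1 + S * δT) * S) * (T + δT) = T + δT) :
    LinearMap.ker ((T * S : X →L[ℂ] X) : X →ₗ[ℂ] X) ≤
      LinearMap.ker (((T + δT) * (Ring.inverse (1 + S * δT) * S) : X →L[ℂ] X) : X →ₗ[ℂ] X) :=
  ContinuousLinearMap.ker_le_ker_of_mul_eq <| mul_mul_mul_eq_of_mul_one_add_mul_eq hB1 <|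
    Ring.inverse_one_add_mul_mul_mul_one_add_mul hinv

theorem stmt_18 {X : Type*} [NormedAddCommGroup X] [InnerProductSpace ℂ X]
    [CompleteSpace X] (T S δT : X →L[ℂ] X)
    (h1 : T * S * T = T)
    (h3 : ContinuousLinearMap.adjoint (T * S) = T * S)
    (h7 : T * S * S = S)
    (hinv : IsUnit (1 + S * δT))
    (hB1 : (T + δT) * (Ring.inverse (1 + S * δT) * S) * (T + δT) = T + δT)
    (hB3 : ContinuousLinearMap.adjoint ((T + δT) * (Ring.inverse (1 + S * δT) * S)) =
      (T + δT) * (Ring.inverse (1 + S * δT) * S))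
    (hB7 : (T + δT) * (Ring.inverse (1 + S * δT) * S) * (Ring.inverse (1 + S * δT) * S) =
      Ring.inverse (1 + S * δT) * S) :
    LinearMap.ker ((T * S : X →L[ℂ] X) : X →ₗ[ℂ] X) ≤
      LinearMap.ker (((T + δT) * (Ring.inverse (1 + S * δT) * S) : X →L[ℂ] X) : X →ₗ[ℂ] X) :=
  stmt_18_general T S δT hinv hB1
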